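/- (Unique padded store) Given decl* ⊢ₛ Γ, there exists a unique padded store μ such that decl* ⊢_pd μ; it satisfies: x_i ∈ dom(μ) for all x ∈ dom(Γ) and i ≤ ⌈Γ(x)⌉_M; μ(x_i) = μ(Γ)(x_i) for i ≤ Γ(x); and μ(x_i) = 0 for i ∈ (Γ(x), ⌈Γ(x)⌉_M). -/

import Mathlib

/-- Rounding up to the nearest multiple of `M`. -/
noncomputable def roundUp (M d : ℕ) : ℕ := sInf {m : ℕ | ∃ n : ℕ, m = n * M ∧ d ≤ m}

/-- Tensor types are tuples of naturals. -/
abbrev Ty := List ℕ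
/-- Multi-indices. -/
abbrev Index := List ℕ

/-- `IdxLe i t`: the multi-index `i` (with components in {1,2,…}) is bounded by `t`. -/
def IdxLe (i t : Index) : Prop :=
  i.length = t.length ∧ ∀ l, l < t.length → 1 ≤ i.getD l 0 ∧ i.getD l 0 ≤ t.getD l 0

/-- Swap the `m`-th and `n`-th components (1-based). -/
def swapIdx (t : List ℕ) (m n : ℕ) : List ℕ :=
  (t.set (m-1) (t.getD (n-1) 0)).set (n-1) (t.getD (m-1) 0)

/-- Delete the `m`-th and `n`-th components (1-based, `m < n`). -/
def delete2 (t : List ℕ) (m n : ℕ) : List ℕ :=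
  (t.eraseIdx (n-1)).eraseIdx (m-1)

/-- Insert value `l` at the `m`-th and `n`-th positions (1-based, `m < n`). -/
def insert2 (i : List ℕ) (m n l : ℕ) : List ℕ :=
  (i.insertIdx (m-1) l).insertIdx (n-1) l

/-- Pad a tensor type componentwise. -/
noncomputable def padT (M : ℕ) (t : Ty) : Ty := t.map (roundUp M)

/-- The padding region of a type: indices within the padded bounds but not the original ones. -/
def PadReg (M : ℕ) (t : Ty) (i : Index) : Prop := ¬ IdxLe i t ∧ IdxLe i (padT M t)

inductive Op | add | sub | mul | div
deriving DecidableEq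

/-- Expressions of the tensor model language. -/
inductive Expr
| var : String → Expr
| paren : Expr → Expr
| binop : Op → Expr → Expr → Expr
| prod : Expr → Expr → Expr
| trans : Expr → ℕ → ℕ → Expr
| contr : Expr → ℕ → ℕ → Expr

/-- A static context maps identifiers to tensor types. -/
abbrev Ctx := String → Option Ty

/-- Componentwise padding of a static context. -/
noncomputable def padCtx (M : ℕ) (Γ : Ctx) : Ctx := fun x => (Γ x).map (padT M)

/-- The typing rules of the tensor model language. -/
inductive HasTy (Γ : Ctx) : Expr → Ty → Prop
| var {x t} : Γ x = some t → HasTy Γ (.var x) t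
| paren {e t} : HasTy Γ e t → HasTy Γ (.paren e) t
| prod {e₀ e₁ t₀ t₁} : HasTy Γ e₀ t₀ → HasTy Γ e₁ t₁ → HasTy Γ (.prod e₀ e₁) (t₀ ++ t₁)
| trans {e t m n} : HasTy Γ e t → 1 ≤ m → m < n → n ≤ t.length →
    HasTy Γ (.trans e m n) (swapIdx t m n)
| contr {e t m n} : HasTy Γ e t → 1 ≤ m → m < n → n ≤ t.length →
    t.getD (m-1) 0 = t.getD (n-1) 0 → HasTy Γ (.contr e m n) (delete2 t m n)
| elem {op e₀ e₁ t} : HasTy Γ e₀ t → HasTy Γ e₁ t → HasTy Γ (.binop op e₀ e₁) t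
| smul {e₀ e₁ t} : HasTy Γ e₀ [] → HasTy Γ e₁ t → HasTy Γ (.binop .mul e₀ e₁) t
| sdiv {e₀ e₁ t} : HasTy Γ e₀ t → HasTy Γ e₁ [] → HasTy Γ (.binop .div e₀ e₁) t

/-- Syntax-directed type inference. -/
def inferTy (Γ : Ctx) : Expr → Option Ty
| .var x => Γ x
| .paren e => inferTy Γ e
| .prod e₀ e₁ => do pure ((← inferTy Γ e₀) ++ (← inferTy Γ e₁))
| .trans e m n => do
    let t ← inferTy Γ e
    if 1 ≤ m ∧ m < n ∧ n ≤ t.length then pure (swapIdx t m n) else none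
| .contr e m n => do
    let t ← inferTy Γ e
    if 1 ≤ m ∧ m < n ∧ n ≤ t.length ∧ t.getD (m-1) 0 = t.getD (n-1) 0 then
      pure (delete2 t m n) else none
| .binop op e₀ e₁ => do
    let t₀ ← inferTy Γ e₀
    let t₁ ← inferTy Γ e₁
    if t₀ = t₁ then pure t₀
    else if op = .mul ∧ t₀ = [] then pure t₁
    else if op = .div ∧ t₁ = [] then pure t₀
    else none

/-- The value domain `𝕍 ∪ {•}`: `none` is the undefined value `•`. -/
abbrev W (V : Type) := Option V

/-- Extended addition: `•` is absorbing. -/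
def wadd {V : Type} [Add V] : W V → W V → W V
| some a, some b => some (a + b)
| _, _ => none

def wsub {V : Type} [Sub V] : W V → W V → W V
| some a, some b => some (a - b)
| _, _ => none

def wmul {V : Type} [Mul V] : W V → W V → W V
| some a, some b => some (a * b)
| _, _ => none

/-- Controlled division on `𝕍 ∪ {•}`: `0/0 = 0`, `0/• = 0`, otherwise `•` absorbs
    and division by zero is undefined. -/
def wdiv {V : Type} [Field V] [DecidableEq V] : W V → W V → W V
| some a, some b => if b = 0 then (if a = 0 then some 0 else none) else some (a / b)
| some a, none => if a = 0 then some 0 else none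
| none, _ => none

def applyOp {V : Type} [Field V] [DecidableEq V] : Op → W V → W V → W V
| .add => wadd
| .sub => wsub
| .mul => wmul
| .div => wdiv

/-- A dynamic store: a partial map from subscripted identifiers to `𝕍 ∪ {•}`. -/
abbrev Store (V : Type) := String × Index → Option (W V)

/-- Denotational semantics of expression evaluation; `none` means evaluation is stuck
    (not well-defined), `some w` means the result is the value `w ∈ 𝕍 ∪ {•}`. -/
def eval {V : Type} [Field V] [DecidableEq V] (Γ : Ctx) (μ : Store V) :
    Expr → Index → Option (W V)
| .var x, i => μ (x, i)
| .paren e, i => eval Γ μ e i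
| .prod e₀ e₁, i => do
    let t₀ ← inferTy Γ e₀
    let v₀ ← eval Γ μ e₀ (i.take t₀.length)
    let v₁ ← eval Γ μ e₁ (i.drop t₀.length)
    pure (wmul v₀ v₁)
| .trans e m n, i => eval Γ μ e (swapIdx i m n)
| .contr e m n, i => do
    let t ← inferTy Γ e
    let vs ← (List.range (t.getD (m-1) 0)).mapM (fun l => eval Γ μ e (insert2 i m n (l+1)))
    pure (vs.foldl wadd (some 0))
| .binop op e₀ e₁, i => do
    let t₀ ← inferTy Γ e₀
    let t₁ ← inferTy Γ e₁
    if op = .mul ∧ t₀ = [] then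
      let v₀ ← eval Γ μ e₀ []
      let v₁ ← eval Γ μ e₁ i
      pure (wmul v₀ v₁)
    else if op = .div ∧ t₁ = [] then
      let v₀ ← eval Γ μ e₀ i
      let v₁ ← eval Γ μ e₁ []
      pure (wdiv v₀ v₁)
    else
      let v₀ ← eval Γ μ e₀ i
      let v₁ ← eval Γ μ e₁ i
      pure (applyOp op v₀ v₁)

open Classical

/-- The unique initial store determined by `Γ` and the ambient values `v`. -/
noncomputable def initStore {V : Type} (Γ : Ctx) (v : String → Index → W V) : Store V :=
  fun p => match Γ p.1 with
  | some t => if IdxLe p.2 t then some (v p.1 p.2) else none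
  | none => none

/-- The unique padded initial store: values on the original domain, zero on padding. -/
noncomputable def initStoreP {V : Type} [Zero V] (M : ℕ) (Γ : Ctx)
    (v : String → Index → W V) : Store V :=
  fun p => match Γ p.1 with
  | some t =>
      if IdxLe p.2 t then some (v p.1 p.2)
      else if IdxLe p.2 (padT M t) then some (some 0)
      else none
  | none => none

/-- A statement `x = e`. -/
abbrev Stmt := String × Expr

/-- Well-formedness of a statement list in context `Γ`. -/
def Ok (Γ : Ctx) (ss : List Stmt) : Prop :=
  ∀ s ∈ ss, ∃ t, Γ s.1 = some t ∧ HasTy Γ s.2 t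

/-- Evaluation of a single assignment statement (rule ev-stmt). -/
inductive StepStmt {V : Type} [Field V] [DecidableEq V] (Γ : Ctx) :
    Store V → Stmt → Store V → Prop
| mk {μ : Store V} {x e t} :
    Γ x = some t →
    (∀ i, IdxLe i t → μ (x, i) ≠ none) →
    (∀ i, IdxLe i t → (eval Γ μ e i).isSome) →
    StepStmt Γ μ (x, e)
      (fun p => if p.1 = x ∧ IdxLe p.2 t then eval Γ μ e p.2 else μ p)

/-- Evaluation of a statement sequence. -/
inductive StepStmts {V : Type} [Field V] [DecidableEq V] (Γ : Ctx) :
    Store V → List Stmt → Store V → Prop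
| nil {μ} : StepStmts Γ μ [] μ
| cons {μ μ' μ'' s ss} : StepStmt Γ μ s μ' → StepStmts Γ μ' ss μ'' →
    StepStmts Γ μ (s :: ss) μ''

/-- Evaluation of a single assignment statement with a padded store (rule ev-pad-stmt). -/
inductive StepStmtP {V : Type} [Field V] [DecidableEq V] (M : ℕ) (Γ : Ctx) :
    Store V → Stmt → Store V → Prop
| mk {μ : Store V} {x e t} :
    Γ x = some t →
    (∀ i, IdxLe i (padT M t) → μ (x, i) ≠ none) →
    (∀ i, IdxLe i (padT M t) → (eval (padCtx M Γ) μ e i).isSome) →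
    StepStmtP M Γ μ (x, e)
      (fun p => if p.1 = x ∧ IdxLe p.2 (padT M t) then eval (padCtx M Γ) μ e p.2 else μ p)

inductive StepStmtsP {V : Type} [Field V] [DecidableEq V] (M : ℕ) (Γ : Ctx) :
    Store V → List Stmt → Store V → Prop
| nil {μ} : StepStmtsP M Γ μ [] μ
| cons {μ μ' μ'' s ss} : StepStmtP M Γ μ s μ' → StepStmtsP M Γ μ' ss μ'' →
    StepStmtsP M Γ μ (s :: ss) μ''

/-!
The four clauses fix `μ (x, i)` at every point: the agreement and padding clauses on the padded
domain, the support clause off it. So `initStoreP` is the only candidate, and it qualifies because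
rounding up to a multiple of `M ≥ 1` only enlarges bounds, so the unpadded domain lies inside the
padded one.
-/

lemma le_roundUp {M : ℕ} (hM : 0 < M) (d : ℕ) : d ≤ roundUp M d := by
  obtain ⟨n, -, hd⟩ := Nat.sInf_mem (s := {m : ℕ | ∃ n : ℕ, m = n * M ∧ d ≤ m})
    ⟨d * M, d, rfl, Nat.le_mul_of_pos_right d hM⟩
  exact hd

lemma IdxLe.to_padT {M : ℕ} (hM : 0 < M) {i t : Index} (h : IdxLe i t) :
    IdxLe i (padT M t) := by
  obtain ⟨hlen, hbound⟩ := h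
  have hlen_pad : (padT M t).length = t.length := List.length_map _
  refine ⟨hlen.trans hlen_pad.symm, fun l hl => ?_⟩
  rw [hlen_pad] at hl
  have hpad_l : (padT M t).getD l 0 = roundUp M (t.getD l 0) := by
    rw [List.getD_eq_getElem _ _ (hlen_pad ▸ hl), List.getD_eq_getElem _ _ hl]
    exact List.getElem_map _
  obtain ⟨hpos, hle⟩ := hbound l hl
  exact ⟨hpos, hpad_l ▸ hle.trans (le_roundUp hM _)⟩

lemma initStore_of_idxLe {V : Type} {Γ : Ctx} {v : String → Index → W V} {x : String} {t : Ty}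
    {i : Index} (hx : Γ x = some t) (hi : IdxLe i t) : initStore Γ v (x, i) = some (v x i) := by
  simp [initStore, hx, hi]

section PaddedStore

variable {V : Type} [Zero V] {M : ℕ} {Γ : Ctx} {v : String → Index → W V} {x : String}
  {t : Ty} {i : Index}

/-- The judgment `decl* ⊢_pd μ` of rule d-pad-var, read off the declarations `Γ`. -/
def IsPaddedStore (M : ℕ) (Γ : Ctx) (v : String → Index → W V) (μ : Store V) : Prop :=
  (∀ x t, Γ x = some t → ∀ i, IdxLe i (padT M t) → μ (x, i) ≠ none) ∧
  (∀ x t, Γ x = some t → ∀ i, IdxLe i t → μ (x, i) = initStore Γ v (x, i)) ∧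
  (∀ x t, Γ x = some t → ∀ i, PadReg M t i → μ (x, i) = some (some 0)) ∧
  (∀ x i, μ (x, i) ≠ none → ∃ t, Γ x = some t ∧ IdxLe i (padT M t))

lemma initStoreP_of_idxLe (hx : Γ x = some t) (hi : IdxLe i t) :
    initStoreP M Γ v (x, i) = some (v x i) := by
  simp [initStoreP, hx, hi]

lemma initStoreP_of_padReg (hx : Γ x = some t) (hi : PadReg M t i) :
    initStoreP M Γ v (x, i) = some (some 0) := by
  simp [initStoreP, hx, hi.1, hi.2]

lemma initStoreP_of_not_idxLe (hx : Γ x = some t) (hi : ¬ IdxLe i t)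
    (hi_pad : ¬ IdxLe i (padT M t)) : initStoreP M Γ v (x, i) = none := by
  simp [initStoreP, hx, hi, hi_pad]

lemma initStoreP_of_undeclared (hx : Γ x = none) : initStoreP M Γ v (x, i) = none := by
  simp [initStoreP, hx]

lemma isPaddedStore_initStoreP (hM : 0 < M) : IsPaddedStore M Γ v (initStoreP M Γ v) := by
  refine ⟨fun x t hx i hi => ?_, fun x t hx i hi => ?_, fun x t hx i hi => ?_, fun x i hne => ?_⟩
  · by_cases hit : IdxLe i t
    · simp [initStoreP_of_idxLe hx hit]
    · simp [initStoreP_of_padReg hx ⟨hit, hi⟩]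
  · rw [initStoreP_of_idxLe hx hi, initStore_of_idxLe hx hi]
  · exact initStoreP_of_padReg hx hi
  · cases hx : Γ x with
    | none => exact absurd (initStoreP_of_undeclared hx) hne
    | some t =>
      refine ⟨t, rfl, ?_⟩
      by_contra hi_pad
      exact hne (initStoreP_of_not_idxLe hx (fun hi => hi_pad (hi.to_padT hM)) hi_pad)

lemma IsPaddedStore.eq_initStoreP {μ : Store V} (hμ : IsPaddedStore M Γ v μ) :
    μ = initStoreP M Γ v := by
  obtain ⟨-, h_orig, h_pad, h_supp⟩ := hμ
  have h_outside : ∀ x i, (∀ t, Γ x = some t → ¬ IdxLe i (padT M t)) → μ (x, i) = none :=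
    fun x i h => by_contra fun hne => by
      obtain ⟨t, hx, hi⟩ := h_supp x i hne
      exact h t hx hi
  funext ⟨x, i⟩
  cases hx : Γ x with
  | none =>
    rw [initStoreP_of_undeclared hx, h_outside x i (fun t ht => by simp [hx] at ht)]
  | some t =>
    by_cases hit : IdxLe i t
    · rw [h_orig x t hx i hit, initStore_of_idxLe hx hit, initStoreP_of_idxLe hx hit]
    by_cases hi_pad : IdxLe i (padT M t)
    · rw [h_pad x t hx i ⟨hit, hi_pad⟩, initStoreP_of_padReg hx ⟨hit, hi_pad⟩]
    · rw [initStoreP_of_not_idxLe hx hit hi_pad,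
        h_outside x i fun t' ht' => Option.some_injective _ (hx.symm.trans ht') ▸ hi_pad]

end PaddedStore

/-- **Unique padded store**: given `Γ` and the ambient values `v`, there is a
unique padded store: its domain is `{x_i : x ∈ dom Γ, i ≤ ⌈Γ(x)⌉_M}`, it agrees
with the unpadded store `μ(Γ)` for `i ≤ Γ(x)`, and it is `0` on the padding
region `(Γ(x), ⌈Γ(x)⌉_M)`. -/
theorem unique_padded_store (V : Type) [Zero V] (M : ℕ) (hM : 1 ≤ M)
    (Γ : Ctx) (v : String → Index → W V) :
    ∃! μ : Store V,
      (∀ x t, Γ x = some t → ∀ i, IdxLe i (padT M t) → μ (x, i) ≠ none) ∧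
      (∀ x t, Γ x = some t → ∀ i, IdxLe i t → μ (x, i) = initStore Γ v (x, i)) ∧
      (∀ x t, Γ x = some t → ∀ i, PadReg M t i → μ (x, i) = some (some 0)) ∧
      (∀ x i, μ (x, i) ≠ none → ∃ t, Γ x = some t ∧ IdxLe i (padT M t)) :=
  ⟨initStoreP M Γ v, isPaddedStore_initStoreP hM, fun _ hμ => IsPaddedStore.eq_initStoreP hμ⟩
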